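/- Let I be an open interval and ξ : ℝ → V/Γ a function. Suppose that for every t ∈ I there exists a function μ : ℝ → V with π(μ(s)) = ξ(s) for all s ∈ I which is differentiable at t. Then there exists a single function λ : ℝ → V with π(λ(s)) = ξ(s) for all s ∈ I which is differentiable at every point of I. -/

import Mathlib

/-!
Induction on `|Γ|`. Fix `t ∈ I` and a lift `μ` differentiable at `t`, with 1-jet
`(x, v) = (μ t, μ' t)`, and let `H` be the common stabilizer of `x` and `v`.

If `H = Γ`, every lift `λ` is differentiable at `t`: near `t` we have `λ s = g_s • μ s`, so
`λ s - x - (s - t) • v = g_s • (μ s - x - (s - t) • v)`, and the `g_s` range over finitely many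
bounded linear maps.

If `H ≠ Γ`, then for `g ∉ H` the displacement `g • (x + τ v) - (x + τ v)` has size at least
`c |τ|` for small `τ`. Hence, near `t`, a lift lying in a thin cone around the tangent line
`x + (s - t) v` differs from `μ` by an element of `H`. Since `μ` itself lies in that cone, `ξ` lifts
to `V / H` near `t` with pointwise differentiable lifts, and the induction hypothesis gives a lift
that is differentiable on a whole neighbourhood of `t`.

The points near which some lift is differentiable form an open set `O`, and a lift differentiable
on `O` is differentiable on all of `I`. On each component of `O` the local lifts are spliced
together. Two lifts differentiable at `p` agree up to one fixed `g` on a set accumulating at `p`, so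
they have the same value and derivative at `p` up to `g`, and a piecewise lift stays
differentiable at the seam. A Lebesgue number handles compact intervals, and an exhaustion handles
the whole component.
-/

open MulAction Filter Topology Set

section Calculus

variable {E : Type*} [NormedAddCommGroup E] [NormedSpace ℝ E]

theorem HasDerivAt.eq_zero_of_frequently_eq_zero {F : ℝ → E} {F' : E} {p : ℝ}
    (hF : HasDerivAt F F' p) (hzero : ∃ᶠ s in 𝓝[≠] p, F s = 0) : F p = 0 ∧ F' = 0 := by
  have hp : F p = 0 := tendsto_nhds_unique_of_frequently_eq
    (hF.continuousAt.tendsto.mono_left nhdsWithin_le_nhds) tendsto_const_nhds hzero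
  refine ⟨hp, tendsto_nhds_unique_of_frequently_eq (hasDerivAt_iff_tendsto_slope.1 hF)
    tendsto_const_nhds (hzero.mono fun s hs => ?_)⟩
  simp [slope_def_module, hs, hp]

theorem differentiableAt_piecewise_Iic {f h : ℝ → E} {p s : ℝ}
    (hf : s ≤ p → DifferentiableAt ℝ f s) (hh : p ≤ s → DifferentiableAt ℝ h s)
    (hval : f p = h p) (hderiv : deriv f p = deriv h p) :
    DifferentiableAt ℝ ((Iic p).piecewise f h) s := by
  rcases lt_trichotomy s p with hs | rfl | hs
  · exact (hf hs.le).congr_of_eventuallyEq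
      ((piecewise_eqOn _ f h).eventuallyEq_of_mem (Iic_mem_nhds hs))
  · have hleft : HasDerivWithinAt ((Iic s).piecewise f h) (deriv f s) (Iic s) s :=
      (hf le_rfl).hasDerivAt.hasDerivWithinAt.congr (piecewise_eqOn _ f h)
        (piecewise_eq_of_mem _ f h self_mem_Iic)
    have hright : HasDerivWithinAt ((Iic s).piecewise f h) (deriv f s) (Ici s) s := by
      rw [hderiv]
      refine (hh le_rfl).hasDerivAt.hasDerivWithinAt.congr (fun x hx => ?_)
        (by rw [piecewise_eq_of_mem _ f h self_mem_Iic, hval])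
      rcases (mem_Ici.1 hx).eq_or_lt with rfl | hlt
      · rw [piecewise_eq_of_mem _ f h self_mem_Iic, hval]
      · exact piecewise_eq_of_notMem _ f h (not_le.2 hlt)
    have := hleft.union hright
    rw [Iic_union_Ici, hasDerivWithinAt_univ] at this
    exact this.differentiableAt
  · refine (hh hs.le).congr_of_eventuallyEq
      ((piecewise_eqOn_compl _ f h).eventuallyEq_of_mem ?_)
    rw [compl_Iic]
    exact Ioi_mem_nhds hs

theorem exists_pos_eventually_mul_abs_le_norm_add_smul {a w : E} (h : a ≠ 0 ∨ w ≠ 0) :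
    ∃ c > 0, ∀ᶠ τ in 𝓝 (0 : ℝ), c * |τ| ≤ ‖a + τ • w‖ := by
  by_cases ha : a = 0
  · refine ⟨‖w‖, norm_pos_iff.2 (h.resolve_left (not_not.2 ha)),
      Eventually.of_forall fun τ => ?_⟩
    rw [ha, zero_add, norm_smul, Real.norm_eq_abs, mul_comm]
  have hpos : 0 < ‖a‖ / 2 := half_pos (norm_pos_iff.2 ha)
  have hsmul : ∀ᶠ τ in 𝓝 (0 : ℝ), ‖τ • w‖ < ‖a‖ / 2 :=
    ((continuous_id.smul continuous_const).norm.tendsto' 0 0 (by simp)).eventually_lt_const hpos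
  have habs : ∀ᶠ τ in 𝓝 (0 : ℝ), |τ| < ‖a‖ / 2 :=
    (continuous_abs.tendsto' 0 0 abs_zero).eventually_lt_const hpos
  refine ⟨1, one_pos, ?_⟩
  filter_upwards [hsmul, habs] with τ hτw hτ
  have : ‖a‖ ≤ ‖a + τ • w‖ + ‖τ • w‖ := by simpa using norm_sub_le (a + τ • w) (τ • w)
  linarith

end Calculus

theorem exists_eqOn_of_eqOn_succ {α β : Type*} {f : ℕ → α → β} {U : ℕ → Set α}
    (hU : Monotone U) (h : ∀ n, EqOn (f (n + 1)) (f n) (U n)) :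
    ∃ F : α → β, (∀ x, ∃ n, F x = f n x) ∧ ∀ n, EqOn F (f n) (U n) := by
  have hle : ∀ m n, m ≤ n → EqOn (f n) (f m) (U m) := by
    intro m n hmn
    induction hmn with
    | refl => exact eqOn_refl _ _
    | step hmk ih => exact fun x hx => (h _ (hU hmk hx)).trans (ih hx)
  classical
  refine ⟨fun x => f (if hx : ∃ n, x ∈ U n then hx.choose else 0) x, fun x => ⟨_, rfl⟩,
    fun n x hx => ?_⟩
  have hx' : ∃ n, x ∈ U n := ⟨n, hx⟩
  simp only [dif_pos hx']
  rcases le_total n hx'.choose with hn | hn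
  · exact hle n _ hn hx
  · exact (hle _ n hn hx'.choose_spec).symm

theorem Set.OrdConnected.exists_Icc_exhaustion {C : Set ℝ} (hCc : C.OrdConnected)
    (hC : IsOpen C) (hne : C.Nonempty) :
    ∃ a b : ℕ → ℝ, Antitone a ∧ Monotone b ∧ (∀ n, a n ≤ b n) ∧ (∀ n, Icc (a n) (b n) ⊆ C) ∧
      ∀ t ∈ C, ∃ n, t ∈ Ioo (a n) (b n) := by
  obtain ⟨r, hr⟩ := Rat.denseRange_cast.exists_mem_open hC hne
  obtain ⟨q, hq⟩ := ((countable_range ((↑) : ℚ → ℝ)).mono inter_subset_right).exists_eq_range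
    (⟨r, hr, r, rfl⟩ : (C ∩ range ((↑) : ℚ → ℝ)).Nonempty)
  have hqC : ∀ k, q k ∈ C := fun k => (hq.symm.subset (mem_range_self k)).1
  have hne' : ∀ n, (Finset.range (n + 1)).Nonempty :=
    fun n => Finset.nonempty_range_iff.2 n.succ_ne_zero
  have hsub : ∀ {m n}, m ≤ n → Finset.range (m + 1) ⊆ Finset.range (n + 1) :=
    fun hmn => Finset.range_subset_range.2 (by omega)
  refine ⟨fun n => (Finset.range (n + 1)).inf' (hne' n) q,
    fun n => (Finset.range (n + 1)).sup' (hne' n) q,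
    fun m n hmn => Finset.inf'_mono q (hsub hmn) _,
    fun m n hmn => Finset.sup'_mono q (hsub hmn) _,
    fun n => (Finset.inf'_le q (Finset.mem_range.2 n.succ_pos)).trans
      (Finset.le_sup' q (Finset.mem_range.2 n.succ_pos)),
    fun n => ?_, fun t ht => ?_⟩
  · obtain ⟨i, -, hi⟩ := Finset.exists_mem_eq_inf' (hne' n) q
    obtain ⟨j, -, hj⟩ := Finset.exists_mem_eq_sup' (hne' n) q
    dsimp only
    rw [hi, hj]
    exact hCc.out (hqC i) (hqC j)
  · obtain ⟨l, u, ⟨hlt, htu⟩, hlu⟩ := mem_nhds_iff_exists_Ioo_subset.1 (hC.mem_nhds ht)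
    obtain ⟨r₁, hlr₁, hr₁t⟩ := exists_rat_btwn hlt
    obtain ⟨r₂, htr₂, hr₂u⟩ := exists_rat_btwn htu
    have hmem : ∀ r : ℚ, (r : ℝ) ∈ Ioo l u → ∃ k, q k = r := fun r hr =>
      (hq.subset ⟨hlu hr, r, rfl⟩ : (r : ℝ) ∈ range q)
    obtain ⟨k₁, hk₁⟩ := hmem r₁ ⟨hlr₁, hr₁t.trans htu⟩
    obtain ⟨k₂, hk₂⟩ := hmem r₂ ⟨hlt.trans htr₂, hr₂u⟩
    refine ⟨max k₁ k₂, ?_, ?_⟩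
    · exact (Finset.inf'_le q (Finset.mem_range.2 (by omega : k₁ < max k₁ k₂ + 1))).trans_lt
        (hk₁ ▸ hr₁t)
    · exact (hk₂ ▸ htr₂).trans_le
        (Finset.le_sup' q (Finset.mem_range.2 (by omega : k₂ < max k₁ k₂ + 1)))

section LinearAction

variable {V : Type*} [NormedAddCommGroup V] [NormedSpace ℝ V] [FiniteDimensional ℝ V]
  {Γ : Type*} [Group Γ] [DistribMulAction Γ V] [SMulCommClass Γ ℝ V]

instance : ContinuousConstSMul Γ V :=
  ⟨fun g => (LinearMap.toContinuousLinearMap (DistribSMul.toLinearMap ℝ V g)).continuous⟩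

theorem HasDerivAt.smul_action {f : ℝ → V} {f' : V} {x : ℝ} (hf : HasDerivAt f f' x) (g : Γ) :
    HasDerivAt (fun s => g • f s) (g • f') x :=
  haveI := SMulCommClass.symm Γ ℝ V
  hf.const_smul g

variable [Finite Γ]

theorem exists_norm_smul_le : ∃ C, 0 ≤ C ∧ ∀ (g : Γ) (v : V), ‖g • v‖ ≤ C * ‖v‖ := by
  let T : Γ → V →L[ℝ] V := fun g =>
    LinearMap.toContinuousLinearMap (DistribSMul.toLinearMap ℝ V g)
  obtain ⟨C, hC⟩ := (finite_range fun g => ‖T g‖).bddAbove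
  refine ⟨max C 0, le_max_right _ _, fun g v => ?_⟩
  calc ‖g • v‖ = ‖T g v‖ := rfl
    _ ≤ ‖T g‖ * ‖v‖ := (T g).le_opNorm v
    _ ≤ max C 0 * ‖v‖ := by gcongr; exact (hC ⟨g, rfl⟩).trans (le_max_left _ _)

theorem exists_pos_eventually_mem_stabilizer (x v : V) :
    ∃ ε > 0, ∀ᶠ τ in 𝓝 (0 : ℝ), ∀ (g : Γ) (y : V), ‖y - (x + τ • v)‖ < ε * |τ| →
      ‖g • y - (x + τ • v)‖ < ε * |τ| → g ∈ stabilizer Γ x ⊓ stabilizer Γ v := by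
  have hper : ∀ g : Γ, ∃ c > 0, ∀ᶠ τ in 𝓝 (0 : ℝ), g ∉ stabilizer Γ x ⊓ stabilizer Γ v →
      c * |τ| ≤ ‖(g • x - x) + τ • (g • v - v)‖ := by
    intro g
    by_cases hg : g ∈ stabilizer Γ x ⊓ stabilizer Γ v
    · exact ⟨1, one_pos, Eventually.of_forall fun _ h => absurd hg h⟩
    have hne : g • x - x ≠ 0 ∨ g • v - v ≠ 0 := by
      rw [sub_ne_zero, sub_ne_zero, ← not_and_or]
      exact hg
    obtain ⟨c, hc, hev⟩ := exists_pos_eventually_mul_abs_le_norm_add_smul hne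
    exact ⟨c, hc, hev.mono fun _ h _ => h⟩
  choose c hc hev using hper
  obtain ⟨g₀, hg₀⟩ := Finite.exists_min c
  obtain ⟨C, hC0, hC⟩ := exists_norm_smul_le (Γ := Γ) (V := V)
  have hε : (C + 1) * (c g₀ / (C + 1)) = c g₀ := by field_simp
  refine ⟨c g₀ / (C + 1), div_pos (hc g₀) (by linarith), ?_⟩
  filter_upwards [eventually_all.2 hev] with τ hτ g y hy hgy
  by_contra hg
  set p := x + τ • v
  have hdecomp : (g • x - x) + τ • (g • v - v) = g • (p - y) + (g • y - p) := by
    simp only [p, smul_add, smul_sub, smul_comm g τ v]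
    abel
  have hlt : c g₀ * |τ| < c g₀ * |τ| :=
    calc c g₀ * |τ| ≤ c g * |τ| := by gcongr; exact hg₀ g
      _ ≤ ‖g • (p - y) + (g • y - p)‖ := hdecomp ▸ hτ g hg
      _ ≤ C * ‖y - p‖ + ‖g • y - p‖ :=
        (norm_add_le _ _).trans (add_le_add_left ((hC g _).trans_eq (by rw [norm_sub_rev])) _)
      _ < C * (c g₀ / (C + 1) * |τ|) + c g₀ / (C + 1) * |τ| :=
        add_lt_add_of_le_of_lt (mul_le_mul_of_nonneg_left hy.le hC0) hgy
      _ = c g₀ * |τ| := by linear_combination |τ| * hε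
  exact lt_irrefl _ hlt

end LinearAction

section Lifts

variable {V : Type*} {Γ : Type*} [Group Γ] [MulAction Γ V]

def IsLiftOn (I : Set ℝ) (ξ : ℝ → Quotient (orbitRel Γ V)) (lam : ℝ → V) : Prop :=
  ∀ s ∈ I, Quotient.mk (orbitRel Γ V) (lam s) = ξ s

variable {I J : Set ℝ} {ξ : ℝ → Quotient (orbitRel Γ V)} {lam mu : ℝ → V}

theorem isLiftOn_out : IsLiftOn I ξ fun s => (ξ s).out :=
  fun _ _ => Quotient.out_eq _

theorem IsLiftOn.mono (h : IsLiftOn I ξ lam) (hJI : J ⊆ I) : IsLiftOn J ξ lam :=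
  fun s hs => h s (hJI hs)

theorem IsLiftOn.smul (h : IsLiftOn I ξ lam) (g : Γ) : IsLiftOn I ξ fun s => g • lam s :=
  fun s hs => (Quotient.sound (mem_orbit (lam s) g)).trans (h s hs)

theorem IsLiftOn.exists_smul_eq (hlam : IsLiftOn I ξ lam) (hmu : IsLiftOn I ξ mu) {s : ℝ}
    (hs : s ∈ I) : ∃ g : Γ, g • mu s = lam s :=
  Quotient.exact ((hlam s hs).trans (hmu s hs).symm)

theorem IsLiftOn.piecewise {W : Set ℝ} [DecidablePred (· ∈ W)]
    (hlam : IsLiftOn (W ∩ I) ξ lam) (hmu : IsLiftOn I ξ mu) :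
    IsLiftOn I ξ (W.piecewise lam mu) := by
  intro s hs
  by_cases hsW : s ∈ W
  · rw [piecewise_eq_of_mem _ _ _ hsW]; exact hlam s ⟨hsW, hs⟩
  · rw [piecewise_eq_of_notMem _ _ _ hsW]; exact hmu s hs

theorem IsLiftOn.of_subgroup {H : Subgroup Γ} (hmu : IsLiftOn I ξ mu)
    (hlam : IsLiftOn I (fun s => Quotient.mk (orbitRel H V) (mu s)) lam) :
    IsLiftOn I ξ lam := by
  intro s hs
  obtain ⟨h, hh⟩ := Quotient.exact (hlam s hs)
  rw [← hmu s hs, ← hh]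
  exact Quotient.sound (mem_orbit _ (h : Γ))

section Differentiable

variable [NormedAddCommGroup V] [NormedSpace ℝ V]

def HasDiffLiftNear (I : Set ℝ) (ξ : ℝ → Quotient (orbitRel Γ V)) (t : ℝ) : Prop :=
  ∃ nu, IsLiftOn I ξ nu ∧ ∀ᶠ s in 𝓝 t, DifferentiableAt ℝ nu s

theorem isOpen_setOf_hasDiffLiftNear : IsOpen {t | HasDiffLiftNear I ξ t} :=
  isOpen_iff_mem_nhds.2 fun _ ⟨nu, hnu, hev⟩ =>
    hev.eventually_nhds.mono fun _ hs => ⟨nu, hnu, hs⟩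

theorem IsLiftOn.hasDiffLiftNear (hlam : IsLiftOn J ξ lam) (hJ : IsOpen J)
    (hlamd : ∀ s ∈ J, DifferentiableAt ℝ lam s) (hmu : IsLiftOn I ξ mu) {t : ℝ} (ht : t ∈ J) :
    HasDiffLiftNear I ξ t := by
  classical
  refine ⟨J.piecewise lam mu, (hlam.mono inter_subset_left).piecewise hmu, ?_⟩
  filter_upwards [hJ.mem_nhds ht] with s hs
  exact (hlamd s hs).congr_of_eventuallyEq
    ((piecewise_eqOn J lam mu).eventuallyEq_of_mem (hJ.mem_nhds hs))

theorem IsLiftOn.exists_differentiableAt_of_eventually {s₀ : ℝ} {psi : ℝ → V}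
    (hmu : IsLiftOn J ξ mu)
    (hpsi : ∀ᶠ s in 𝓝 s₀, s ∈ J → Quotient.mk (orbitRel Γ V) (psi s) = ξ s)
    (hpsid : DifferentiableAt ℝ psi s₀) :
    ∃ lam, IsLiftOn J ξ lam ∧ DifferentiableAt ℝ lam s₀ := by
  classical
  obtain ⟨W, hW, hWo, hs₀⟩ := eventually_nhds_iff.1 hpsi
  exact ⟨W.piecewise psi mu, IsLiftOn.piecewise (fun s hs => hW s hs.1 hs.2) hmu,
    hpsid.congr_of_eventuallyEq
      ((piecewise_eqOn W psi mu).eventuallyEq_of_mem (hWo.mem_nhds hs₀))⟩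

end Differentiable

end Lifts

section DifferentiableLifts

variable {V : Type*} [NormedAddCommGroup V] [NormedSpace ℝ V] [FiniteDimensional ℝ V]
  {Γ : Type*} [Group Γ] [Finite Γ] [DistribMulAction Γ V] [SMulCommClass Γ ℝ V]
  {I : Set ℝ} {ξ : ℝ → Quotient (orbitRel Γ V)}

theorem IsLiftOn.hasDerivAt_of_mem_fixedPoints {lam mu : ℝ → V} (hlam : IsLiftOn I ξ lam)
    (hI : IsOpen I) {t : ℝ} (ht : t ∈ I) {v : V} (hmu : IsLiftOn I ξ mu)
    (hmud : HasDerivAt mu v t) (hx : mu t ∈ fixedPoints Γ V) (hv : v ∈ fixedPoints Γ V) :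
    HasDerivAt lam v t := by
  obtain ⟨C, -, hC⟩ := exists_norm_smul_le (Γ := Γ) (V := V)
  have hlamt : lam t = mu t := by
    obtain ⟨g, hg⟩ := hlam.exists_smul_eq hmu ht
    rw [← hg, hx g]
  rw [hasDerivAt_iff_isLittleO] at hmud ⊢
  refine (Asymptotics.IsBigO.of_bound C ?_).trans_isLittleO hmud
  filter_upwards [hI.mem_nhds ht] with s hs
  obtain ⟨g, hg⟩ := hlam.exists_smul_eq hmu hs
  have : lam s - lam t - (s - t) • v = g • (mu s - mu t - (s - t) • v) := by
    rw [smul_sub, smul_sub, hg, hlamt, hx g, smul_comm g (s - t) v, hv g]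
  rw [this]
  exact hC g _

theorem IsLiftOn.exists_lift_eq_deriv_eq {f h : ℝ → V} (hf : IsLiftOn I ξ f)
    (hh : IsLiftOn I ξ h) (hI : IsOpen I) {p : ℝ} (hp : p ∈ I) (hfd : DifferentiableAt ℝ f p)
    (hhd : DifferentiableAt ℝ h p) :
    ∃ h', IsLiftOn I ξ h' ∧ (∀ s, DifferentiableAt ℝ h s → DifferentiableAt ℝ h' s) ∧
      h' p = f p ∧ deriv h' p = deriv f p := by
  have hev : ∀ᶠ s in 𝓝[≠] p, ∃ g : Γ, f s - g • h s = 0 := by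
    filter_upwards [nhdsWithin_le_nhds (hI.mem_nhds hp)] with s hs
    obtain ⟨g, hg⟩ := hf.exists_smul_eq hh hs
    exact ⟨g, by rw [hg, sub_self]⟩
  -- pigeonhole over the finite group: one `g` works on a set accumulating at `p`
  obtain ⟨g, hg⟩ := frequently_exists.1 hev.frequently
  obtain ⟨hval, hderiv⟩ :=
    (hfd.hasDerivAt.sub (hhd.hasDerivAt.smul_action g)).eq_zero_of_frequently_eq_zero hg
  refine ⟨fun s => g • h s, hh.smul g,
    fun s hs => (hs.hasDerivAt.smul_action g).differentiableAt, (sub_eq_zero.1 hval).symm, ?_⟩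
  rw [(hhd.hasDerivAt.smul_action g).deriv]
  exact (sub_eq_zero.1 hderiv).symm

theorem exists_lift_differentiableAt_Icc (hI : IsOpen I) {a b : ℝ} (hab : a ≤ b)
    (hsub : Icc a b ⊆ I) (hgood : ∀ t ∈ Icc a b, HasDiffLiftNear I ξ t) :
    ∃ lam, IsLiftOn I ξ lam ∧ ∀ s ∈ Icc a b, DifferentiableAt ℝ lam s := by
  classical
  choose! nu hnu hnud using hgood
  obtain ⟨δ, hδ, hball⟩ := lebesgue_number_lemma_of_metric isCompact_Icc
    (c := fun t : Icc a b => {s | ∀ᶠ u in 𝓝 s, DifferentiableAt ℝ (nu t) u})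
    (fun _ => isOpen_setOfPred_eventually_nhds) (fun s hs => mem_iUnion.2 ⟨⟨s, hs⟩, hnud s hs⟩)
  have hstep : ∀ n : ℕ, ∃ lam, IsLiftOn I ξ lam ∧
      ∀ s ∈ Icc a b, s ≤ a + n * (δ / 2) → DifferentiableAt ℝ lam s := by
    intro n
    induction n with
    | zero =>
      refine ⟨nu a, hnu a ⟨le_rfl, hab⟩, fun s hs hsa => ?_⟩
      obtain rfl : s = a := le_antisymm (by simpa using hsa) hs.1
      exact (hnud s hs).self_of_nhds
    | succ n ih =>
      obtain ⟨lam, hlam, hlamd⟩ := ih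
      set p := a + n * (δ / 2) with hpdef
      by_cases hpb : b ≤ p
      · exact ⟨lam, hlam, fun s hs _ => hlamd s hs (hs.2.trans hpb)⟩
      have hp : p ∈ Icc a b := ⟨le_add_of_nonneg_right (by positivity), (not_le.1 hpb).le⟩
      obtain ⟨t, ht⟩ := hball p hp
      have hnut : ∀ s ∈ Metric.ball p δ, DifferentiableAt ℝ (nu t) s :=
        fun s hs => (ht hs).self_of_nhds
      obtain ⟨h', hh', hh'd, hval, hderiv⟩ := hlam.exists_lift_eq_deriv_eq (hnu t t.2) hI
        (hsub hp) (hlamd p hp le_rfl) (hnut p (Metric.mem_ball_self hδ))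
      refine ⟨(Iic p).piecewise lam h', (hlam.mono inter_subset_right).piecewise hh',
        fun s hs hsp => differentiableAt_piecewise_Iic (hlamd s hs)
          (fun hps => hh'd s (hnut s ?_)) hval.symm hderiv.symm⟩
      rw [Metric.mem_ball, Real.dist_eq, abs_of_nonneg (sub_nonneg.2 hps)]
      push_cast at hsp
      linarith
  obtain ⟨n, hn⟩ := exists_nat_ge ((b - a) / (δ / 2))
  obtain ⟨lam, hlam, hlamd⟩ := hstep n
  refine ⟨lam, hlam, fun s hs => hlamd s hs ?_⟩
  have := (div_le_iff₀ (half_pos hδ)).1 hn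
  linarith [hs.2]

theorem IsLiftOn.exists_eqOn_Icc_differentiableAt_Icc {lam : ℝ → V} (hlam : IsLiftOn I ξ lam)
    (hI : IsOpen I) {a b a' b' : ℝ} (ha : a' ≤ a) (hab : a ≤ b) (hb : b ≤ b')
    (hsub : Icc a' b' ⊆ I) (hgood : ∀ t ∈ Icc a' b', HasDiffLiftNear I ξ t)
    (hlamd : ∀ s ∈ Icc a b, DifferentiableAt ℝ lam s) :
    ∃ lam', IsLiftOn I ξ lam' ∧ EqOn lam' lam (Icc a b) ∧
      ∀ s ∈ Icc a' b', DifferentiableAt ℝ lam' s := by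
  classical
  obtain ⟨mu, hmu, hmud⟩ :=
    exists_lift_differentiableAt_Icc hI (ha.trans (hab.trans hb)) hsub hgood
  have hbI : b ∈ Icc a' b' := ⟨ha.trans hab, hb⟩
  have haI : a ∈ Icc a' b' := ⟨ha, hab.trans hb⟩
  -- glue a translate of `mu` to the right of `b`, then another one to the left of `a`
  obtain ⟨mu₁, hmu₁, hmu₁d, hval₁, hderiv₁⟩ :=
    hlam.exists_lift_eq_deriv_eq hmu hI (hsub hbI) (hlamd b ⟨hab, le_rfl⟩) (hmud b hbI)
  set lam₁ := (Iic b).piecewise lam mu₁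
  have hlam₁ : IsLiftOn I ξ lam₁ := (hlam.mono inter_subset_right).piecewise hmu₁
  have hlam₁d : ∀ s ∈ Icc a b', DifferentiableAt ℝ lam₁ s := fun s hs =>
    differentiableAt_piecewise_Iic (fun hsb => hlamd s ⟨hs.1, hsb⟩)
      (fun hbs => hmu₁d s (hmud s ⟨ha.trans hs.1, hs.2⟩)) hval₁.symm hderiv₁.symm
  obtain ⟨mu₂, hmu₂, hmu₂d, hval₂, hderiv₂⟩ :=
    hlam₁.exists_lift_eq_deriv_eq hmu hI (hsub haI) (hlam₁d a ⟨le_rfl, hab.trans hb⟩)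
      (hmud a haI)
  refine ⟨(Iic a).piecewise mu₂ lam₁, (hmu₂.mono inter_subset_right).piecewise hlam₁,
    fun s hs => ?_, fun s hs => differentiableAt_piecewise_Iic
      (fun hsa => hmu₂d s (hmud s ⟨hs.1, hsa.trans (hab.trans hb)⟩))
      (fun has => hlam₁d s ⟨has, hs.2⟩) hval₂ hderiv₂⟩
  have hlam₁s : lam₁ s = lam s := piecewise_eq_of_mem _ _ _ hs.2
  rcases hs.1.eq_or_lt with rfl | has
  · rw [piecewise_eq_of_mem _ _ _ self_mem_Iic, hval₂, hlam₁s]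
  · rw [piecewise_eq_of_notMem (Iic a) _ _ (not_le.2 has), hlam₁s]

theorem exists_lift_differentiableAt_of_ordConnected (hI : IsOpen I) {C : Set ℝ}
    (hC : IsOpen C) (hCc : C.OrdConnected) (hCI : C ⊆ I)
    (hgood : ∀ t ∈ C, HasDiffLiftNear I ξ t) :
    ∃ lam, IsLiftOn I ξ lam ∧ ∀ t ∈ C, DifferentiableAt ℝ lam t := by
  rcases C.eq_empty_or_nonempty with rfl | hne
  · exact ⟨_, isLiftOn_out, by simp⟩
  obtain ⟨a, b, ha, hb, hab, habC, hcover⟩ := hCc.exists_Icc_exhaustion hC hne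
  have hgood' : ∀ n, ∀ t ∈ Icc (a n) (b n), HasDiffLiftNear I ξ t :=
    fun n t ht => hgood t (habC n ht)
  obtain ⟨lam₀, hlam₀⟩ :=
    exists_lift_differentiableAt_Icc hI (hab 0) ((habC 0).trans hCI) (hgood' 0)
  have hstep : ∀ n lam,
      IsLiftOn I ξ lam ∧ (∀ s ∈ Icc (a n) (b n), DifferentiableAt ℝ lam s) →
      ∃ lam', (IsLiftOn I ξ lam' ∧
          ∀ s ∈ Icc (a (n + 1)) (b (n + 1)), DifferentiableAt ℝ lam' s) ∧
        EqOn lam' lam (Icc (a n) (b n)) := fun n lam ⟨hlam, hlamd⟩ =>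
    let ⟨lam', h₁, h₂, h₃⟩ := hlam.exists_eqOn_Icc_differentiableAt_Icc hI (ha n.le_succ)
      (hab n) (hb n.le_succ) ((habC _).trans hCI) (hgood' _) hlamd
    ⟨lam', ⟨h₁, h₃⟩, h₂⟩
  choose! next hnext hnext_eq using hstep
  let f : ℕ → ℝ → V := fun n => Nat.rec lam₀ next n
  have hf : ∀ n, IsLiftOn I ξ (f n) ∧ ∀ s ∈ Icc (a n) (b n), DifferentiableAt ℝ (f n) s :=
    fun n => Nat.rec hlam₀ (fun n ih => hnext n _ ih) n
  obtain ⟨F, hF, hFeq⟩ := exists_eqOn_of_eqOn_succ (f := f) (U := fun n => Icc (a n) (b n))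
    (fun m n hmn => Icc_subset_Icc (ha hmn) (hb hmn)) (fun n => hnext_eq n _ (hf n))
  refine ⟨F, fun s hs => ?_, fun t ht => ?_⟩
  · obtain ⟨n, hn⟩ := hF s
    rw [hn]
    exact (hf n).1 s hs
  · obtain ⟨n, hn⟩ := hcover t ht
    exact ((hf n).2 t (Ioo_subset_Icc_self hn)).congr_of_eventuallyEq
      ((hFeq n).eventuallyEq_of_mem (Icc_mem_nhds hn.1 hn.2))

theorem exists_lift_differentiableAt_of_isOpen (hI : IsOpen I) {O : Set ℝ} (hO : IsOpen O)
    (hOI : O ⊆ I) (hgood : ∀ t ∈ O, HasDiffLiftNear I ξ t) :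
    ∃ lam, IsLiftOn I ξ lam ∧ ∀ t ∈ O, DifferentiableAt ℝ lam t := by
  have hcomp : ∀ C : Set ℝ, ∃ lam, IsLiftOn I ξ lam ∧
      (IsOpen C → C.OrdConnected → C ⊆ O → ∀ t ∈ C, DifferentiableAt ℝ lam t) := by
    intro C
    by_cases hC : IsOpen C ∧ C.OrdConnected ∧ C ⊆ O
    · obtain ⟨lam, hlam, hlamd⟩ := exists_lift_differentiableAt_of_ordConnected hI hC.1
        hC.2.1 (hC.2.2.trans hOI) fun t ht => hgood t (hC.2.2 ht)
      exact ⟨lam, hlam, fun _ _ _ => hlamd⟩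
    · exact ⟨_, isLiftOn_out, fun h₁ h₂ h₃ => absurd ⟨h₁, h₂, h₃⟩ hC⟩
  choose Λ hΛ hΛd using hcomp
  refine ⟨fun s => Λ (connectedComponentIn O s) s, fun s hs => hΛ _ s hs, fun t ht => ?_⟩
  have hCo : IsOpen (connectedComponentIn O t) := hO.connectedComponentIn
  refine (hΛd _ hCo isPreconnected_connectedComponentIn.ordConnected
    (connectedComponentIn_subset O t) t (mem_connectedComponentIn ht)).congr_of_eventuallyEq ?_
  filter_upwards [hCo.mem_nhds (mem_connectedComponentIn ht)] with s hs
  rw [← connectedComponentIn_eq hs]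

theorem IsLiftOn.exists_isOpen_isLiftOn_subgroup {mu : ℝ → V} (hmu : IsLiftOn I ξ mu)
    (hI : IsOpen I) (hloc : ∀ s ∈ I, ∃ nu, IsLiftOn I ξ nu ∧ DifferentiableAt ℝ nu s)
    {t : ℝ} (ht : t ∈ I) (hmud : DifferentiableAt ℝ mu t) {H : Subgroup Γ}
    (hH : stabilizer Γ (mu t) ⊓ stabilizer Γ (deriv mu t) ≤ H) :
    ∃ J, IsOpen J ∧ t ∈ J ∧ J ⊆ I ∧ ∀ s₀ ∈ J, ∃ phi,
      IsLiftOn J (fun s => Quotient.mk (orbitRel H V) (mu s)) phi ∧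
        DifferentiableAt ℝ phi s₀ := by
  obtain ⟨ε, hε, hsep⟩ := exists_pos_eventually_mem_stabilizer (Γ := Γ) (mu t) (deriv mu t)
  have hdev : ∀ᶠ s in 𝓝 t, ‖mu s - (mu t + (s - t) • deriv mu t)‖ ≤ ε / 2 * |s - t| := by
    filter_upwards [(hasDerivAt_iff_isLittleO.1 hmud.hasDerivAt).bound (half_pos hε)] with s hs
    rwa [sub_sub, Real.norm_eq_abs] at hs
  have hev : ∀ᶠ s in 𝓝 t, s ∈ I ∧
      ‖mu s - (mu t + (s - t) • deriv mu t)‖ ≤ ε / 2 * |s - t| ∧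
      ∀ (g : Γ) (y : V), ‖y - (mu t + (s - t) • deriv mu t)‖ < ε * |s - t| →
        ‖g • y - (mu t + (s - t) • deriv mu t)‖ < ε * |s - t| →
          g ∈ stabilizer Γ (mu t) ⊓ stabilizer Γ (deriv mu t) := by
    filter_upwards [hI.mem_nhds ht, hdev,
      (tendsto_sub_nhds_zero_iff.2 tendsto_id).eventually hsep] with s h₁ h₂ h₃ using ⟨h₁, h₂, h₃⟩
  obtain ⟨J, hJ, hJo, htJ⟩ := eventually_nhds_iff.1 hev
  refine ⟨J, hJo, htJ, fun s hs => (hJ s hs).1, fun s₀ hs₀ => ?_⟩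
  have hcone : ∀ s ∈ J, ∀ y : V, Quotient.mk (orbitRel Γ V) y = ξ s →
      ‖y - (mu t + (s - t) • deriv mu t)‖ < ε * |s - t| →
        Quotient.mk (orbitRel H V) y = Quotient.mk _ (mu s) := by
    intro s hs y hy hcone
    obtain ⟨hsI, hsdev, hssep⟩ := hJ s hs
    have hst : 0 < |s - t| := by
      by_contra! h
      exact (norm_nonneg _).not_gt (hcone.trans_le (mul_nonpos_of_nonneg_of_nonpos hε.le h))
    obtain ⟨g, rfl⟩ : ∃ g : Γ, g • mu s = y := Quotient.exact (hy.trans (hmu s hsI).symm)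
    have hgH : g ∈ H := hH (hssep g (mu s) (hsdev.trans_lt (by nlinarith)) hcone)
    exact Quotient.sound (mem_orbit (mu s) (⟨g, hgH⟩ : H))
  rcases eq_or_ne s₀ t with rfl | hs₀t
  · exact ⟨mu, fun _ _ => rfl, hmud⟩
  -- away from `t`, a translate of a lift differentiable at `s₀` through `mu s₀` stays in the cone
  obtain ⟨nu, hnu, hnud⟩ := hloc s₀ (hJ s₀ hs₀).1
  obtain ⟨g₀, hg₀⟩ := hmu.exists_smul_eq hnu (hJ s₀ hs₀).1
  have hpsi := hnud.hasDerivAt.smul_action g₀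
  have htube : ∀ᶠ s in 𝓝 s₀,
      ‖g₀ • nu s - (mu t + (s - t) • deriv mu t)‖ < ε * |s - t| := by
    have hc := hpsi.continuousAt
    refine ContinuousAt.eventually_lt (by fun_prop) (by fun_prop) ?_
    have h₀ : 0 < |s₀ - t| := abs_pos.2 (sub_ne_zero.2 hs₀t)
    rw [hg₀]
    nlinarith [(hJ s₀ hs₀).2.1]
  refine IsLiftOn.exists_differentiableAt_of_eventually (mu := mu) (fun _ _ => rfl) ?_
    hpsi.differentiableAt
  filter_upwards [htube] with s hs hsJ
  exact hcone s hsJ _ (hnu.smul g₀ s (hJ s hsJ).1) hs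

end DifferentiableLifts

theorem stmt14_general {V : Type*} [NormedAddCommGroup V] [NormedSpace ℝ V] [FiniteDimensional ℝ V]
    {Γ : Type*} [Group Γ] [Finite Γ] [DistribMulAction Γ V] [SMulCommClass Γ ℝ V]
    (I : Set ℝ) (hIopen : IsOpen I)
    (ξ : ℝ → Quotient (MulAction.orbitRel Γ V))
    (hloc : ∀ t ∈ I, ∃ mu : ℝ → V,
      (∀ s ∈ I, Quotient.mk (MulAction.orbitRel Γ V) (mu s) = ξ s) ∧
      DifferentiableAt ℝ mu t) :
    ∃ lam : ℝ → V,
      (∀ s ∈ I, Quotient.mk (MulAction.orbitRel Γ V) (lam s) = ξ s) ∧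
      ∀ t ∈ I, DifferentiableAt ℝ lam t := by
  induction hn : Nat.card Γ using Nat.strong_induction_on generalizing Γ I ξ with
  | _ n ih =>
  have hdich : ∀ t ∈ I, (∀ lam, IsLiftOn I ξ lam → DifferentiableAt ℝ lam t) ∨
      HasDiffLiftNear I ξ t := by
    intro t ht
    obtain ⟨mu, hmu, hmud⟩ : ∃ mu, IsLiftOn I ξ mu ∧ DifferentiableAt ℝ mu t := hloc t ht
    set H := stabilizer Γ (mu t) ⊓ stabilizer Γ (deriv mu t)
    by_cases hH : H = ⊤
    · have hfix : ∀ g : Γ, g ∈ H := fun g => hH ▸ Subgroup.mem_top g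
      exact .inl fun lam hlam => (hlam.hasDerivAt_of_mem_fixedPoints hIopen ht hmu
        hmud.hasDerivAt (fun g => (hfix g).1) (fun g => (hfix g).2)).differentiableAt
    obtain ⟨J, hJo, htJ, hJI, hJ⟩ := hmu.exists_isOpen_isLiftOn_subgroup hIopen hloc ht hmud le_rfl
    obtain ⟨phi, hphi, hphid⟩ := ih _ (hn ▸ H.card_le_card_group.lt_of_ne
      ((Subgroup.card_eq_iff_eq_top H).not.2 hH)) J hJo _ hJ rfl
    exact .inr (((hmu.mono hJI).of_subgroup hphi).hasDiffLiftNear hJo hphid hmu htJ)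
  obtain ⟨lam, hlam, hlamd⟩ := exists_lift_differentiableAt_of_isOpen hIopen
    (hIopen.inter (isOpen_setOf_hasDiffLiftNear (ξ := ξ))) inter_subset_left fun t ht => ht.2
  exact ⟨lam, hlam, fun t ht => (hdich t ht).elim (fun h => h lam hlam) fun h => hlamd t ⟨ht, h⟩⟩

/-- Let `Γ` be a finite group acting linearly on a finite-dimensional real normed vector space
`V`, and `π : V → V/Γ` the projection onto the orbit space. Let `I` be an open interval and
`ξ : ℝ → V/Γ`. If for every `t ∈ I` there exists a lift of `ξ` on `I` which is differentiable
at `t`, then there exists a single lift of `ξ` on `I` which is differentiable at every point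
of `I`. -/
theorem stmt14 {V : Type*} [NormedAddCommGroup V] [NormedSpace ℝ V] [FiniteDimensional ℝ V]
    {Γ : Type*} [Group Γ] [Finite Γ] [DistribMulAction Γ V] [SMulCommClass Γ ℝ V]
    (I : Set ℝ) (hIopen : IsOpen I) (hIconn : I.OrdConnected)
    (ξ : ℝ → Quotient (MulAction.orbitRel Γ V))
    (hloc : ∀ t ∈ I, ∃ mu : ℝ → V,
      (∀ s ∈ I, Quotient.mk (MulAction.orbitRel Γ V) (mu s) = ξ s) ∧
      DifferentiableAt ℝ mu t) :
    ∃ lam : ℝ → V,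
      (∀ s ∈ I, Quotient.mk (MulAction.orbitRel Γ V) (lam s) = ξ s) ∧
      ∀ t ∈ I, DifferentiableAt ℝ lam t :=
  stmt14_general I hIopen ξ hloc
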